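/- arXiv:1904.07052 — 4 statements merged into one kernel-verified Lean document; each statement's English description precedes it below -/
import Mathlib

section
/- Suppose x(ε) = x⁰ − εα(x⁰ − γ⁰) + R with ‖R‖ ≤ σ ε^{3/2} ‖x⁰ − γ⁰‖^{3/2}, and ‖γ(ε) − γ⁰‖ ≤ εν, with 0 < εα < 1. Then ‖x(ε) − γ(ε)‖ ≤ ‖x⁰ − γ⁰‖·(1 − ε(α − σ√(ε‖x⁰ − γ⁰‖))) + εν. -/
/-! Writing `d = x⁰ - γ⁰`, the decomposition `x(ε) - γ(ε) = (1 - εα) d + R + (γ⁰ - γ(ε))` and the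
triangle inequality give `‖x(ε) - γ(ε)‖ ≤ (1 - εα) ‖d‖ + ‖R‖ + εν`, where `1 - εα > 0` is what lets
the first norm be computed exactly. The remainder bound is of the required shape because
`(ε ‖d‖) ^ (3/2) = ε ‖d‖ · √(ε ‖d‖)`. -/

lemma Real.rpow_three_halves_eq_mul_sqrt {t : ℝ} (ht : 0 ≤ t) : t ^ ((3 : ℝ) / 2) = t * √t := by
  rw [Real.sqrt_eq_rpow, show (3 : ℝ) / 2 = 1 + 1 / 2 by norm_num,
    Real.rpow_add' ht (by norm_num), Real.rpow_one]

lemma norm_sub_le_of_eq_sub_smul_add {E : Type*} [SeminormedAddCommGroup E] [NormedSpace ℝ E]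
    {x₀ γ₀ x γ R : E} {c : ℝ} (hc : c ≤ 1) (hx : x = x₀ - c • (x₀ - γ₀) + R) :
    ‖x - γ‖ ≤ (1 - c) * ‖x₀ - γ₀‖ + ‖R‖ + ‖γ - γ₀‖ := by
  have hsplit : x - γ = ((1 - c) • (x₀ - γ₀) + R) - (γ - γ₀) := by
    rw [hx]; module
  calc ‖x - γ‖ ≤ ‖(1 - c) • (x₀ - γ₀)‖ + ‖R‖ + ‖γ - γ₀‖ := by
        rw [hsplit]
        exact (norm_sub_le _ _).trans (by gcongr; exact norm_add_le _ _)
    _ = (1 - c) * ‖x₀ - γ₀‖ + ‖R‖ + ‖γ - γ₀‖ := by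
        rw [norm_smul, Real.norm_of_nonneg (sub_nonneg.mpr hc)]

theorem stmt_10_general {n : ℕ} (x0 γ0 xε γε R : EuclideanSpace ℝ (Fin n))
    (α σ ε ν : ℝ) (hε : 0 < ε)
    (hεα : ε * α < 1)
    (hx : xε = x0 - (ε * α) • (x0 - γ0) + R)
    (hR : ‖R‖ ≤ σ * ε ^ ((3:ℝ)/2) * ‖x0 - γ0‖ ^ ((3:ℝ)/2))
    (hγ : ‖γε - γ0‖ ≤ ε * ν) :
    ‖xε - γε‖ ≤ ‖x0 - γ0‖ * (1 - ε * (α - σ * Real.sqrt (ε * ‖x0 - γ0‖))) + ε * ν := by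
  have hstep := norm_sub_le_of_eq_sub_smul_add (γ := γε) hεα.le hx
  rw [mul_assoc, ← Real.mul_rpow hε.le (norm_nonneg _),
    Real.rpow_three_halves_eq_mul_sqrt (by positivity)] at hR
  linarith

/-- One-step contraction estimate from the Volterra expansion. -/
theorem stmt_10 {n : ℕ} (x0 γ0 xε γε R : EuclideanSpace ℝ (Fin n))
    (α σ ε ν : ℝ) (hα : 0 < α) (hσ : 0 < σ) (hε : 0 < ε) (hν : 0 < ν)
    (hεα : ε * α < 1)
    (hx : xε = x0 - (ε * α) • (x0 - γ0) + R)
    (hR : ‖R‖ ≤ σ * ε ^ ((3:ℝ)/2) * ‖x0 - γ0‖ ^ ((3:ℝ)/2))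
    (hγ : ‖γε - γ0‖ ≤ ε * ν) :
    ‖xε - γε‖ ≤ ‖x0 - γ0‖ * (1 - ε * (α - σ * Real.sqrt (ε * ‖x0 - γ0‖))) + ε * ν :=
  stmt_10_general x0 γ0 xε γε R α σ ε ν hε hεα hx hR hγ
end

section
/- Let κ ∈ ℕ be a positive integer, ε > 0, and b ∈ ℝ. Define u(t) = √(4π κ |b| / ε) cos(2πκ t/ε) and v(t) = sign(b) √(4π κ |b| / ε) sin(2πκ t/ε). Then ∫₀^ε u(t) dt = 0, ∫₀^ε v(t) dt = 0, and ∫₀^ε ∫₀^t (u(t)v(s) − v(t)u(s)) ds dt = −2εb. -/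
open Real intervalIntegral

/-! With `c = 2πκ/ε`, the controls are `u = A cos (c t)` and `v = sign b · A sin (c t)` with
`A² = 2c|b|`. The inner integral of `u t v s - v t u s` collapses, by `sin² + cos² = 1`,
to `(A² sign b / c) (cos (c t) - 1)`; since `cε = 2πκ` is a whole number of periods, the
oscillating part integrates to zero over `[0, ε]` and only `-(A² sign b / c) ε = -2εb` remains. -/

theorem Real.sign_mul_abs (r : ℝ) : Real.sign r * |r| = r := by
  rcases lt_trichotomy r 0 with h | rfl | h
  · rw [sign_of_neg h, abs_of_neg h]; ring
  · simp
  · rw [sign_of_pos h, abs_of_pos h, one_mul]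

section Oscillation

variable {c : ℝ} (hc : c ≠ 0)
include hc

theorem integral_cos_const_mul (T : ℝ) :
    ∫ t in (0:ℝ)..T, cos (c * t) = sin (c * T) / c := by
  rw [integral_comp_mul_left cos hc, integral_cos]
  simp [div_eq_inv_mul]

theorem integral_sin_const_mul (T : ℝ) :
    ∫ t in (0:ℝ)..T, sin (c * t) = (1 - cos (c * T)) / c := by
  rw [integral_comp_mul_left sin hc, integral_sin]
  simp [div_eq_inv_mul, mul_sub]

theorem integral_cos_mul_sin_sub_sin_mul_cos (a b t : ℝ) :
    ∫ s in (0:ℝ)..t, (a * cos (c * t) * (b * sin (c * s)) - b * sin (c * t) * (a * cos (c * s)))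
      = a * b / c * (cos (c * t) - 1) := by
  have hcos : IntervalIntegrable (fun s => cos (c * s)) MeasureTheory.volume 0 t :=
    (by fun_prop : Continuous fun s => cos (c * s)).intervalIntegrable 0 t
  have hsin : IntervalIntegrable (fun s => sin (c * s)) MeasureTheory.volume 0 t :=
    (by fun_prop : Continuous fun s => sin (c * s)).intervalIntegrable 0 t
  simp only [← mul_assoc]
  rw [integral_sub (hsin.const_mul _) (hcos.const_mul _), integral_const_mul, integral_const_mul,
    integral_sin_const_mul hc, integral_cos_const_mul hc]
  field_simp
  linear_combination -a * b * sin_sq_add_cos_sq (c * t)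

theorem integral_integral_cos_mul_sin_sub_sin_mul_cos (a b T : ℝ) :
    ∫ t in (0:ℝ)..T, ∫ s in (0:ℝ)..t,
        (a * cos (c * t) * (b * sin (c * s)) - b * sin (c * t) * (a * cos (c * s)))
      = a * b / c * (sin (c * T) / c - T) := by
  have hcos : IntervalIntegrable (fun t => cos (c * t)) MeasureTheory.volume 0 T :=
    (by fun_prop : Continuous fun t => cos (c * t)).intervalIntegrable 0 T
  simp only [integral_cos_mul_sin_sub_sin_mul_cos hc]
  rw [integral_const_mul, integral_sub hcos intervalIntegrable_const, integral_cos_const_mul hc,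
    integral_const, smul_eq_mul, mul_one, sub_zero]

end Oscillation

/-- Averaging identity: the oscillating controls have zero mean and produce a
net area −2εb over one sampling period. -/
theorem stmt_11 (κ : ℕ) (hκ : 0 < κ) (ε : ℝ) (hε : 0 < ε) (b : ℝ)
    (u v : ℝ → ℝ)
    (hu : ∀ t, u t = Real.sqrt (4 * π * κ * |b| / ε) * Real.cos (2 * π * κ * t / ε))
    (hv : ∀ t, v t = Real.sign b * Real.sqrt (4 * π * κ * |b| / ε) *
      Real.sin (2 * π * κ * t / ε)) :
    (∫ t in (0:ℝ)..ε, u t) = 0 ∧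
    (∫ t in (0:ℝ)..ε, v t) = 0 ∧
    (∫ t in (0:ℝ)..ε, ∫ s in (0:ℝ)..t, (u t * v s - v t * u s)) = -2 * ε * b := by
  set c := 2 * π * κ / ε
  set A := √(4 * π * κ * |b| / ε)
  have hc : c ≠ 0 := by positivity
  have hcε : c * ε = κ * (2 * π) := by simp only [c]; field_simp
  have hA : A * A = 4 * π * κ * |b| / ε := mul_self_sqrt (by positivity)
  have hu' : ∀ t, u t = A * cos (c * t) := fun t => by rw [hu, mul_div_right_comm]
  have hv' : ∀ t, v t = sign b * A * sin (c * t) := fun t => by rw [hv, mul_div_right_comm]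
  have hgain : A * (sign b * A) / c = 2 * b := by
    rw [mul_left_comm, hA]
    conv_rhs => rw [← Real.sign_mul_abs b]
    simp only [c]
    field_simp
    ring
  simp only [hu', hv']
  refine ⟨?_, ?_, ?_⟩
  · rw [integral_const_mul, integral_cos_const_mul hc, hcε, sin_periodic.nat_mul_eq, sin_zero,
      zero_div, mul_zero]
  · rw [integral_const_mul, integral_sin_const_mul hc, hcε, cos_nat_mul_two_pi, sub_self,
      zero_div, mul_zero]
  · rw [integral_integral_cos_mul_sin_sub_sin_mul_cos hc, hcε, sin_periodic.nat_mul_eq, sin_zero,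
      zero_div, zero_sub, hgain]
    ring
end

section
/- Consider the underwater vehicle fields on D = {x ∈ ℝ⁶ : |x₅| < π/2}: f₁(x) = (cos x₅ cos x₆, cos x₅ sin x₆, −sin x₅, 0,0,0)ᵀ, f₂(x) = (0,0,0,1,0,0)ᵀ, f₃(x) = (0,0,0, sin x₄ tan x₅, cos x₄, sin x₄ sec x₅)ᵀ, f₄(x) = (0,0,0, cos x₄ tan x₅, −sin x₄, cos x₄ sec x₅)ᵀ. Then for every x ∈ D the six vectors f₁(x), f₂(x), f₃(x), f₄(x), [f₁,f₃](x), [f₁,f₄](x) are linearly independent, i.e., span ℝ⁶. -/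
open Real

noncomputable section

abbrev V6 := Fin 6 → ℝ

/-- Lie bracket of vector fields: [f,g](x) = Dg(x)f(x) − Df(x)g(x). -/
def lieBracket (f g : V6 → V6) (x : V6) : V6 :=
  fderiv ℝ g x (f x) - fderiv ℝ f x (g x)

def f₁ (x : V6) : V6 :=
  ![Real.cos (x 4) * Real.cos (x 5), Real.cos (x 4) * Real.sin (x 5),
    -Real.sin (x 4), 0, 0, 0]

def f₂ (_ : V6) : V6 := ![0, 0, 0, 1, 0, 0]

def f₃ (x : V6) : V6 :=
  ![0, 0, 0, Real.sin (x 3) * Real.tan (x 4), Real.cos (x 3),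
    Real.sin (x 3) * (1 / Real.cos (x 4))]

def f₄ (x : V6) : V6 :=
  ![0, 0, 0, Real.cos (x 3) * Real.tan (x 4), -Real.sin (x 3),
    Real.cos (x 3) * (1 / Real.cos (x 4))]

/-!
Indices are 0-based: `x 3, x 4, x 5` are the paper's `x₄, x₅, x₆`.

The fields `f₃, f₄` depend only on `x 3, x 4`, along which `f₁` has no component, so
`Df₃ f₁ = Df₄ f₁ = 0` and `[f₁, fₖ] = -Df₁ fₖ` is a combination of the partial derivatives of `f₁`
in `x 4` and `x 5`. On the first three coordinates `f₁` and the two brackets then form an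
orthonormal frame, and on the last three `f₂, f₃, f₄` have determinant `sec (x 4)`. Up to a
permutation the matrix of the six vectors is block diagonal, with determinant `sec (x 4) ≠ 0`.
-/

theorem fderiv_apply_eq_zero_of_forall_add_smul_eq {𝕜 E F : Type*} [NontriviallyNormedField 𝕜]
    [NormedAddCommGroup E] [NormedSpace 𝕜 E] [NormedAddCommGroup F] [NormedSpace 𝕜 F]
    {g : E → F} {x v : E} (h : ∀ t : 𝕜, g (x + t • v) = g x) : fderiv 𝕜 g x v = 0 := by
  by_cases hg : DifferentiableAt 𝕜 g x
  · rw [← hg.lineDeriv_eq_fderiv, lineDeriv]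
    simp [h]
  · simp [fderiv_zero_of_not_differentiableAt hg]

theorem linearIndependent_and_span_eq_top_of_det_ne_zero {K ι : Type*} [Field K] [Fintype ι]
    [DecidableEq ι] {v : ι → ι → K} (h : (Matrix.of v).det ≠ 0) :
    LinearIndependent K v ∧ Submodule.span K (Set.range v) = ⊤ := by
  have hli : LinearIndependent K v := Matrix.linearIndependent_rows_of_det_ne_zero h
  exact ⟨hli, hli.span_eq_top_of_card_eq_finrank' (Module.finrank_fintype_fun_eq_card K).symm⟩

-- `∂f₁/∂x 4` and `∂f₁/∂x 5`: the derivatives in pitch and yaw.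
def f₁Pitch (x : V6) : V6 :=
  ![-Real.sin (x 4) * Real.cos (x 5), -Real.sin (x 4) * Real.sin (x 5), -Real.cos (x 4), 0, 0, 0]

def f₁Yaw (x : V6) : V6 :=
  ![-Real.cos (x 4) * Real.sin (x 5), Real.cos (x 4) * Real.cos (x 5), 0, 0, 0, 0]

open ContinuousLinearMap in
theorem hasFDerivAt_f₁ (x : V6) :
    HasFDerivAt f₁ ((proj 4 : V6 →L[ℝ] ℝ).smulRight (f₁Pitch x) +
      (proj 5 : V6 →L[ℝ] ℝ).smulRight (f₁Yaw x)) x := by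
  have h4 := hasFDerivAt_apply (𝕜 := ℝ) 4 x
  have h5 := hasFDerivAt_apply (𝕜 := ℝ) 5 x
  rw [hasFDerivAt_pi']
  intro i
  fin_cases i
  · exact (h4.cos.mul h5.cos).congr_fderiv (by ext v; simp [f₁Pitch, f₁Yaw]; ring)
  · exact (h4.cos.mul h5.sin).congr_fderiv (by ext v; simp [f₁Pitch, f₁Yaw]; ring)
  · exact h4.sin.neg.congr_fderiv (by ext v; simp [f₁Pitch, f₁Yaw]; ring)
  all_goals exact (hasFDerivAt_const 0 x).congr_fderiv (by ext v; simp [f₁Pitch, f₁Yaw])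

theorem fderiv_f₁_apply (x v : V6) : fderiv ℝ f₁ x v = v 4 • f₁Pitch x + v 5 • f₁Yaw x := by
  simp [(hasFDerivAt_f₁ x).fderiv]

theorem lieBracket_f₁_eq {g : V6 → V6} {x : V6} (hg : ∀ t : ℝ, g (x + t • f₁ x) = g x) :
    lieBracket f₁ g x = -(g x 4 • f₁Pitch x + g x 5 • f₁Yaw x) := by
  rw [lieBracket, fderiv_apply_eq_zero_of_forall_add_smul_eq hg, fderiv_f₁_apply, zero_sub]

theorem f₃_add_smul_f₁ (x : V6) (t : ℝ) : f₃ (x + t • f₁ x) = f₃ x := by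
  simp [f₃, f₁]

theorem f₄_add_smul_f₁ (x : V6) (t : ℝ) : f₄ (x + t • f₁ x) = f₄ x := by
  simp [f₄, f₁]

def frame (x : V6) : Fin 6 → V6 :=
  ![f₁ x, f₂ x, f₃ x, f₄ x, lieBracket f₁ f₃ x, lieBracket f₁ f₄ x]

theorem det_frame (x : V6) (hc : cos (x 4) ≠ 0) : (Matrix.of (frame x)).det = 1 / cos (x 4) := by
  rw [frame, lieBracket_f₁_eq (f₃_add_smul_f₁ x), lieBracket_f₁_eq (f₄_add_smul_f₁ x)]
  simp [Matrix.det_succ_row_zero, Fin.sum_univ_succ, f₁, f₂, f₃, f₄, f₁Pitch, f₁Yaw, Fin.succAbove]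
  field_simp
  -- the left side is `(sin² + cos²)(x 3) ^ 2 * (sin² + cos²)(x 4) * (sin² + cos²)(x 5)`
  have h3 := sin_sq_add_cos_sq (x 3)
  have h4 := sin_sq_add_cos_sq (x 4)
  have h5 := sin_sq_add_cos_sq (x 5)
  linear_combination (sin (x 3) ^ 2 + cos (x 3) ^ 2 + 1) * (sin (x 4) ^ 2 + cos (x 4) ^ 2) *
      (sin (x 5) ^ 2 + cos (x 5) ^ 2) * h3 + (sin (x 5) ^ 2 + cos (x 5) ^ 2) * h4 + h5

/-- Rank condition for the 3D underwater vehicle: the six vectors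
f₁, f₂, f₃, f₄, [f₁,f₃], [f₁,f₄] are linearly independent, i.e. span ℝ⁶,
on D = {|x₅| < π/2}. -/
theorem stmt_16 (x : V6) (hx : |x 4| < π / 2) :
    LinearIndependent ℝ
      ![f₁ x, f₂ x, f₃ x, f₄ x, lieBracket f₁ f₃ x, lieBracket f₁ f₄ x] ∧
    Submodule.span ℝ
      {f₁ x, f₂ x, f₃ x, f₄ x, lieBracket f₁ f₃ x, lieBracket f₁ f₄ x} = ⊤ := by
  have hcos : cos (x 4) ≠ 0 := (cos_pos_of_mem_Ioo (abs_lt.mp hx)).ne'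
  obtain ⟨hli, hspan⟩ :=
    linearIndependent_and_span_eq_top_of_det_ne_zero (det_frame x hcos ▸ one_div_ne_zero hcos)
  refine ⟨hli, ?_⟩
  simpa only [frame, Matrix.range_cons, Matrix.range_empty, Set.singleton_union, insert_empty_eq] using hspan

end
end

section
/- Let r_k ≥ 0 satisfy r_{k+1} ≤ (1 − ε(λ + ν_k/ρ'))r_k + εν_k with ν_k → 0, where ε, λ, ρ' > 0, ελ < 1, and r_k ≤ ρ' for all k. Then r_k → 0 as k → ∞. (This is the discrete analogue of Corollary 1: if ‖γ̇(t)‖ → 0, then the tracking error ‖x(t) − γ(t)‖ → 0.) -/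
open Filter Topology

/-! Dropping the nonnegative term `ε (νₖ / ρ') rₖ` leaves `rₖ₊₁ ≤ a rₖ + ε νₖ` with
`a = 1 - ελ ∈ [0, 1)`. Once `ε νₖ ≤ (1 - a) δ`, the level `δ` is a fixed point of
`x ↦ a x + (1 - a) δ`, so from then on `rₖ` exceeds `δ` by at most a geometrically decaying
amount; as `δ > 0` is arbitrary, `rₖ → 0`. -/

lemma le_pow_mul_add_of_le_mul_add {a c : ℝ} {r : ℕ → ℝ} (ha : 0 ≤ a)
    (hrec : ∀ k, r (k + 1) ≤ a * r k + (1 - a) * c) (n : ℕ) :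
    r n ≤ a ^ n * (r 0 - c) + c := by
  induction n with
  | zero => simp
  | succ n ih =>
    calc r (n + 1) ≤ a * r n + (1 - a) * c := hrec n
      _ ≤ a * (a ^ n * (r 0 - c) + c) + (1 - a) * c := by gcongr a * ?_ + _
      _ = a ^ (n + 1) * (r 0 - c) + c := by ring

lemma eventually_lt_of_le_mul_add {a : ℝ} {r b : ℕ → ℝ} (ha0 : 0 ≤ a) (ha1 : a < 1)
    (hb : Tendsto b atTop (𝓝 0)) (hrec : ∀ k, r (k + 1) ≤ a * r k + b k)
    {δ : ℝ} (hδ : 0 < δ) : ∀ᶠ k in atTop, r k < 2 * δ := by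
  obtain ⟨N, hN⟩ : ∃ N, ∀ k ≥ N, b k ≤ (1 - a) * δ :=
    eventually_atTop.1 <| hb.eventually <| ge_mem_nhds <| mul_pos (sub_pos.2 ha1) hδ
  have hshift (m : ℕ) : r (m + N) ≤ a ^ m * (r N - δ) + δ := by
    simpa using le_pow_mul_add_of_le_mul_add (r := fun m => r (m + N)) ha0
      (fun k => by simpa [add_right_comm] using
        (hrec (k + N)).trans (add_le_add_right (hN _ (Nat.le_add_left N k)) _)) m
  have hdecay : ∀ᶠ m in atTop, a ^ m * (r N - δ) < δ := by
    have := (tendsto_pow_atTop_nhds_zero_of_lt_one ha0 ha1).mul_const (r N - δ)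
    exact this.eventually (gt_mem_nhds (by simpa using hδ))
  rw [← map_add_atTop_eq_nat N, eventually_map]
  filter_upwards [hdecay] with m hm
  linarith [hshift m]

theorem tendsto_zero_of_le_mul_add {a : ℝ} {r b : ℕ → ℝ} (ha0 : 0 ≤ a) (ha1 : a < 1)
    (hr : ∀ k, 0 ≤ r k) (hb : Tendsto b atTop (𝓝 0))
    (hrec : ∀ k, r (k + 1) ≤ a * r k + b k) :
    Tendsto r atTop (𝓝 0) := by
  refine tendsto_order.2 ⟨fun c hc => Eventually.of_forall fun k => hc.trans_le (hr k),
    fun c hc => ?_⟩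
  filter_upwards [eventually_lt_of_le_mul_add ha0 ha1 hb hrec (half_pos hc)] with k hk
  linarith

theorem stmt_18_general (ε lam ρ' : ℝ) (hε : 0 < ε) (hlam : 0 < lam) (hρ' : 0 < ρ')
    (hεlam : ε * lam < 1)
    (ν : ℕ → ℝ) (hν : ∀ k, 0 ≤ ν k) (hν0 : Tendsto ν atTop (nhds 0))
    (r : ℕ → ℝ) (hr : ∀ k, 0 ≤ r k)
    (hrec : ∀ k, r (k + 1) ≤ (1 - ε * (lam + ν k / ρ')) * r k + ε * ν k) :
    Tendsto r atTop (nhds 0) := by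
  have hrec' (k : ℕ) : r (k + 1) ≤ (1 - ε * lam) * r k + ε * ν k := by
    have : 0 ≤ ε * (ν k / ρ') * r k :=
      mul_nonneg (mul_nonneg hε.le (div_nonneg (hν k) hρ'.le)) (hr k)
    linarith [hrec k]
  refine tendsto_zero_of_le_mul_add (by linarith) (sub_lt_self 1 (mul_pos hε hlam)) hr ?_ hrec'
  simpa using hν0.const_mul ε

/-- Discrete analogue of Corollary 1: if the disturbance νₖ tends to 0, the
tracking error tends to 0. -/
theorem stmt_18 (ε lam ρ' : ℝ) (hε : 0 < ε) (hlam : 0 < lam) (hρ' : 0 < ρ')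
    (hεlam : ε * lam < 1)
    (ν : ℕ → ℝ) (hν : ∀ k, 0 ≤ ν k) (hν0 : Tendsto ν atTop (nhds 0))
    (r : ℕ → ℝ) (hr : ∀ k, 0 ≤ r k) (hrρ : ∀ k, r k ≤ ρ')
    (hrec : ∀ k, r (k + 1) ≤ (1 - ε * (lam + ν k / ρ')) * r k + ε * ν k) :
    Tendsto r atTop (nhds 0) :=
  stmt_18_general ε lam ρ' hε hlam hρ' hεlam ν hν hν0 r hr hrec
end
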